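/- The Demazure–Lusztig operators Tᵢ = q − ((xᵢ − q x_{i+1})/(xᵢ − x_{i+1}))(1 − sᵢ) on rational functions in x₁,…,xₙ satisfy the braid relations: Tᵢ T_{i+1} Tᵢ = T_{i+1} Tᵢ T_{i+1} for 1 ≤ i ≤ n−2, and Tᵢ Tⱼ = Tⱼ Tᵢ whenever |i−j| ≥ 2. -/
import Mathlib
set_option maxHeartbeats 1000000

/-- The Demazure–Lusztig operator
`Tᵢ f (x) = q f(x) − ((xᵢ − q x_{i+1})/(xᵢ − x_{i+1})) (f(x) − f(sᵢ x))`. -/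
noncomputable def DL (n i : ℕ) (hi : i + 1 < n) (q : ℂ)
    (f : (Fin n → ℂ) → ℂ) : (Fin n → ℂ) → ℂ :=
  fun x =>
    q * f x
      - ((x ⟨i, by omega⟩ - q * x ⟨i + 1, hi⟩) / (x ⟨i, by omega⟩ - x ⟨i + 1, hi⟩)) *
        (f x - f (x ∘ Equiv.swap ⟨i, by omega⟩ ⟨i + 1, hi⟩))


noncomputable def TT {n : ℕ} (a b : Fin n) (q : ℂ) (f : (Fin n → ℂ) → ℂ) : (Fin n → ℂ) → ℂ :=
  fun x => q * f x - ((x a - q * x b) / (x a - x b)) * (f x - f (x ∘ Equiv.swap a b))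

lemma DL_eq_TT (n i : ℕ) (hi : i + 1 < n) (q : ℂ) (f : (Fin n → ℂ) → ℂ) :
    DL n i hi q f = TT ⟨i, by omega⟩ ⟨i+1, hi⟩ q f := rfl

lemma comp2 {n : ℕ} (x : Fin n → ℂ) (s t : Equiv.Perm (Fin n)) :
    (x ∘ ⇑s) ∘ ⇑t = x ∘ ⇑(s * t) := by
  ext k; simp [Equiv.Perm.mul_apply]

lemma braid {n : ℕ} (a b c : Fin n) (hab : a ≠ b) (hac : a ≠ c) (hbc : b ≠ c)
    (q : ℂ) (f : (Fin n → ℂ) → ℂ) (x : Fin n → ℂ)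
    (h1 : x a ≠ x b) (h2 : x a ≠ x c) (h3 : x b ≠ x c) :
    TT a b q (TT b c q (TT a b q f)) x = TT b c q (TT a b q (TT b c q f)) x := by
  have t1 : Equiv.swap a b * Equiv.swap b c * Equiv.swap a b = Equiv.swap a c := by
    rw [Equiv.swap_comm a b, Equiv.swap_comm b c,
      Equiv.swap_mul_swap_mul_swap hbc.symm hac.symm, Equiv.swap_comm]
  have t2 : Equiv.swap b c * Equiv.swap a b * Equiv.swap b c = Equiv.swap a c := by
    rw [Equiv.swap_mul_swap_mul_swap hab hac, Equiv.swap_comm]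
  simp only [TT, comp2, t1, t2, Function.comp_apply, Equiv.Perm.mul_apply,
    Equiv.swap_apply_left, Equiv.swap_apply_right,
    Equiv.swap_apply_of_ne_of_ne hab hac,
    Equiv.swap_apply_of_ne_of_ne hac.symm hbc.symm,
    Equiv.swap_apply_of_ne_of_ne hab.symm hbc,
    Equiv.swap_mul_self, Equiv.Perm.coe_one, Function.comp_id]
  have d1 : x a - x b ≠ 0 := sub_ne_zero.mpr h1
  have d2 : x b - x a ≠ 0 := sub_ne_zero.mpr h1.symm
  have d3 : x a - x c ≠ 0 := sub_ne_zero.mpr h2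
  have d4 : x c - x a ≠ 0 := sub_ne_zero.mpr h2.symm
  have d5 : x b - x c ≠ 0 := sub_ne_zero.mpr h3
  have d6 : x c - x b ≠ 0 := sub_ne_zero.mpr h3.symm
  set A := f x with hA
  set B := f (x ∘ ⇑(Equiv.swap a b)) with hB
  set C := f (x ∘ ⇑(Equiv.swap b c)) with hC
  set D := f (x ∘ ⇑(Equiv.swap a b * Equiv.swap b c)) with hD
  set E := f (x ∘ ⇑(Equiv.swap b c * Equiv.swap a b)) with hE
  set F := f (x ∘ ⇑(Equiv.swap a c)) with hF
  clear_value A B C D E F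
  set P := (x a - q * x b) / (x a - x b) with hP
  set Pp := (x b - q * x a) / (x b - x a) with hPp
  set Q := (x b - q * x c) / (x b - x c) with hQ
  set Qp := (x c - q * x b) / (x c - x b) with hQp
  set R := (x a - q * x c) / (x a - x c) with hR
  clear_value P Pp Q Qp R
  have eP : P * (x a - x b) = x a - q * x b := by rw [hP, div_mul_cancel₀ _ d1]
  have ePp : Pp * (x b - x a) = x b - q * x a := by rw [hPp, div_mul_cancel₀ _ d2]
  have eQ : Q * (x b - x c) = x b - q * x c := by rw [hQ, div_mul_cancel₀ _ d5]
  have eQp : Qp * (x c - x b) = x c - q * x b := by rw [hQp, div_mul_cancel₀ _ d6]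
  have eR : R * (x a - x c) = x a - q * x c := by rw [hR, div_mul_cancel₀ _ d3]
  have r1 : P + Pp = q + 1 := by
    apply mul_left_cancel₀ d1
    linear_combination eP - ePp
  have r2 : Q + Qp = q + 1 := by
    apply mul_left_cancel₀ d5
    linear_combination eQ - eQp
  have r3 : P * Q - P * R - Q * R + R + q * R = q := by
    apply mul_left_cancel₀ (mul_ne_zero d1 (mul_ne_zero d5 d3))
    linear_combination (-(R*(x c)*(x c)) + R*(x b)*(x c) + R*(x a)*(x c) - R*(x a)*(x b)
        + Q*(x c)*(x c) - Q*(x b)*(x c) - Q*(x a)*(x c) + Q*(x a)*(x b)) * eP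
      + (-((x a)*(x c)) + (x a)*(x a) - R*(x b)*(x c) + R*(x a)*(x c) + R*(x a)*(x b)
        - R*(x a)*(x a) + q*(x b)*(x c) - q*(x a)*(x b)) * eQ
      + ((x b)*(x c) - (x a)*(x b) - q*(x b)*(x c) + q*(x a)*(x b)) * eR
  linear_combination (A * (-(P*R) + q*P) + B * (P*R - q*P)) * r1
    + (A * (Q*R - q*Q) + C * (-(Q*R) + q*Q)) * r2
    + (A * (Q - P) + B * P - C * Q) * r3

lemma commute_swap {n : ℕ} (a b c d : Fin n) (hac : a ≠ c) (had : a ≠ d)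
    (hbc : b ≠ c) (hbd : b ≠ d) :
    Equiv.swap a b * Equiv.swap c d = Equiv.swap c d * Equiv.swap a b := by
  ext k
  simp only [Equiv.Perm.mul_apply, Equiv.swap_apply_def]
  split_ifs <;> simp_all <;> tauto

lemma TT_comm {n : ℕ} (a b c d : Fin n) (hab : a ≠ b) (hcd : c ≠ d)
    (hac : a ≠ c) (had : a ≠ d) (hbc : b ≠ c) (hbd : b ≠ d)
    (q : ℂ) (f : (Fin n → ℂ) → ℂ) (x : Fin n → ℂ)
    (h1 : x a ≠ x b) (h2 : x c ≠ x d) :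
    TT a b q (TT c d q f) x = TT c d q (TT a b q f) x := by
  simp only [TT, comp2, commute_swap a b c d hac had hbc hbd,
    Function.comp_apply, Equiv.Perm.mul_apply,
    Equiv.swap_apply_left, Equiv.swap_apply_right,
    Equiv.swap_apply_of_ne_of_ne hac had,
    Equiv.swap_apply_of_ne_of_ne hbc hbd,
    Equiv.swap_apply_of_ne_of_ne hac.symm hbc.symm,
    Equiv.swap_apply_of_ne_of_ne had.symm hbd.symm]
  ring

/-- The Demazure–Lusztig operators satisfy the braid relations:
`Tᵢ T_{i+1} Tᵢ = T_{i+1} Tᵢ T_{i+1}` and `Tᵢ Tⱼ = Tⱼ Tᵢ` for `|i−j| ≥ 2`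
(pointwise, away from the relevant diagonal hyperplanes). -/
theorem statement4 (n : ℕ) (q : ℂ) :
    (∀ i : ℕ, ∀ hi : i + 2 < n, ∀ f : (Fin n → ℂ) → ℂ, ∀ x : Fin n → ℂ,
      x ⟨i, by omega⟩ ≠ x ⟨i + 1, by omega⟩ →
      x ⟨i, by omega⟩ ≠ x ⟨i + 2, hi⟩ →
      x ⟨i + 1, by omega⟩ ≠ x ⟨i + 2, hi⟩ →
      DL n i (by omega) q (DL n (i + 1) (by omega) q (DL n i (by omega) q f)) x
        = DL n (i + 1) (by omega) q (DL n i (by omega) q (DL n (i + 1) (by omega) q f)) x)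
    ∧ (∀ i j : ℕ, ∀ hi : i + 1 < n, ∀ hj : j + 1 < n, i + 2 ≤ j →
        ∀ f : (Fin n → ℂ) → ℂ, ∀ x : Fin n → ℂ,
        x ⟨i, by omega⟩ ≠ x ⟨i + 1, hi⟩ → x ⟨j, by omega⟩ ≠ x ⟨j + 1, hj⟩ →
        DL n i hi q (DL n j hj q f) x = DL n j hj q (DL n i hi q f) x) := by
  constructor
  · intro i hi f x h1 h2 h3
    rw [DL_eq_TT, DL_eq_TT, DL_eq_TT, DL_eq_TT, DL_eq_TT, DL_eq_TT]
    exact braid ⟨i, by omega⟩ ⟨i + 1, by omega⟩ ⟨i + 2, hi⟩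
      (by simp [Fin.ext_iff] <;> omega) (by simp [Fin.ext_iff] <;> omega)
      (by simp [Fin.ext_iff] <;> omega) q f x h1 h2 h3
  · intro i j hi hj hij f x h1 h2
    rw [DL_eq_TT, DL_eq_TT, DL_eq_TT, DL_eq_TT]
    exact TT_comm ⟨i, by omega⟩ ⟨i + 1, hi⟩ ⟨j, by omega⟩ ⟨j + 1, hj⟩
      (by simp [Fin.ext_iff] <;> omega) (by simp [Fin.ext_iff] <;> omega)
      (by simp [Fin.ext_iff] <;> omega) (by simp [Fin.ext_iff] <;> omega)
      (by simp [Fin.ext_iff] <;> omega) (by simp [Fin.ext_iff] <;> omega) q f x h1 h2
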